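/- arXiv:1711.00949 — 5 statements merged into one kernel-verified Lean document; each statement's English description precedes it below -/
import Mathlib

section
/- Let c ≤ d be real numbers. For μ ∈ ℝ, let ρ(μ) := Φ̄(d − μ)/Φ̄(c − μ), which equals P(Y > d)/P(Y > c) for Y distributed N(μ,1). Then ρ is nondecreasing on ℝ. Consequently, if α ∈ (0,1) and d satisfies Φ̄(d) = α Φ̄(c), the selective test rejecting when Y > d, conditional on selection {Y > c}, is unbiased: ρ(μ) ≤ α for all μ ≤ 0 and ρ(μ) ≥ α for all μ ≥ 0, with ρ(0) = α. -/
/-!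
Writing `Y ~ N(μ₂, 1)` as an exponential tilt of `N(μ₁, 1)`, the density ratio
`t ↦ exp((μ₂ - μ₁) t + (μ₁² - μ₂²)/2)` is nondecreasing for `μ₁ ≤ μ₂`. A nondecreasing tilt
moves conditional mass within `{Y > c}` towards its upper part `{Y > d}`: comparing the
tilt with its value at `d` on `(c, d]` and on `(d, ∞)` gives
`P₁(Y > d) P₂(Y > c) ≤ P₂(Y > d) P₁(Y > c)`. Unbiasedness follows since `ρ(0) = α`.
-/

open MeasureTheory ProbabilityTheory Set

/-- The standard normal density. -/
noncomputable def stdphi (t : ℝ) : ℝ :=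
  (Real.sqrt (2 * Real.pi))⁻¹ * Real.exp (-t ^ 2 / 2)

/-- The standard normal upper-tail probability Φ̄. -/
noncomputable def Phibar (x : ℝ) : ℝ := ∫ t in Set.Ioi x, stdphi t

/-- If `h` is nondecreasing, tilting a nonnegative density `f` by `h` does not decrease the
proportion of the mass on `(c, ∞)` that lies in `(d, ∞)`. -/
theorem setIntegral_Ioi_mul_setIntegral_Ioi_mul_le {ν : Measure ℝ} {f h : ℝ → ℝ} {c d : ℝ}
    (hcd : c ≤ d) (hf : ∀ t, 0 ≤ f t) (hh : Monotone h)
    (hfi : IntegrableOn f (Ioi c) ν) (hfhi : IntegrableOn (fun t => f t * h t) (Ioi c) ν) :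
    (∫ t in Ioi d, f t ∂ν) * ∫ t in Ioi c, f t * h t ∂ν ≤
      (∫ t in Ioi d, f t * h t ∂ν) * ∫ t in Ioi c, f t ∂ν := by
  have hsplit : ∀ g : ℝ → ℝ, IntegrableOn g (Ioi c) ν →
      ∫ t in Ioi c, g t ∂ν = (∫ t in Ioc c d, g t ∂ν) + ∫ t in Ioi d, g t ∂ν := by
    intro g hg
    rw [← setIntegral_union (Ioc_disjoint_Ioi le_rfl) measurableSet_Ioi
      (hg.mono_set Ioc_subset_Ioi_self) (hg.mono_set (Ioi_subset_Ioi hcd)),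
      Ioc_union_Ioi_eq_Ioi hcd]
  have hfd : IntegrableOn f (Ioi d) ν := hfi.mono_set (Ioi_subset_Ioi hcd)
  have hfcd : IntegrableOn f (Ioc c d) ν := hfi.mono_set Ioc_subset_Ioi_self
  have h_upper : h d * ∫ t in Ioi d, f t ∂ν ≤ ∫ t in Ioi d, f t * h t ∂ν := by
    rw [← integral_const_mul]
    refine setIntegral_mono_on (hfd.const_mul _) (hfhi.mono_set (Ioi_subset_Ioi hcd))
      measurableSet_Ioi fun t ht => ?_
    rw [mul_comm]
    exact mul_le_mul_of_nonneg_left (hh ht.le) (hf t)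
  have h_lower : ∫ t in Ioc c d, f t * h t ∂ν ≤ h d * ∫ t in Ioc c d, f t ∂ν := by
    rw [← integral_const_mul]
    refine setIntegral_mono_on (hfhi.mono_set Ioc_subset_Ioi_self) (hfcd.const_mul _)
      measurableSet_Ioc fun t ht => ?_
    rw [mul_comm (h d)]
    exact mul_le_mul_of_nonneg_left (hh ht.2) (hf t)
  have hfd_nonneg : 0 ≤ ∫ t in Ioi d, f t ∂ν := setIntegral_nonneg measurableSet_Ioi fun t _ => hf t
  have hfcd_nonneg : 0 ≤ ∫ t in Ioc c d, f t ∂ν :=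
    setIntegral_nonneg measurableSet_Ioc fun t _ => hf t
  rw [hsplit _ hfi, hsplit _ hfhi]
  nlinarith [mul_le_mul_of_nonneg_left h_lower hfd_nonneg,
    mul_le_mul_of_nonneg_right h_upper hfcd_nonneg]

lemma stdphi_pos (t : ℝ) : 0 < stdphi t := by
  unfold stdphi
  have : 0 < Real.sqrt (2 * Real.pi) := Real.sqrt_pos.2 (by positivity)
  positivity

lemma integrable_stdphi : Integrable stdphi := by
  have h : stdphi = fun t => (Real.sqrt (2 * Real.pi))⁻¹ * Real.exp (-2⁻¹ * t ^ 2) := by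
    funext t; unfold stdphi; ring_nf
  rw [h]
  exact (integrable_exp_neg_mul_sq (by norm_num)).const_mul _

lemma integrable_stdphi_sub (μ : ℝ) : Integrable fun t => stdphi (t - μ) :=
  integrable_stdphi.comp_sub_right μ

lemma setIntegral_Ioi_stdphi_sub (x μ : ℝ) :
    ∫ t in Ioi x, stdphi (t - μ) = Phibar (x - μ) := by
  have h := (measurePreserving_sub_right volume μ).setIntegral_preimage_emb
    (MeasurableEquiv.subRight μ).measurableEmbedding stdphi (Ioi (x - μ))
  rwa [show (fun t : ℝ => t - μ) ⁻¹' Ioi (x - μ) = Ioi x by ext; simp] at h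

lemma Phibar_pos (x : ℝ) : 0 < Phibar x := by
  unfold Phibar
  rw [setIntegral_pos_iff_support_of_nonneg_ae
    (Filter.Eventually.of_forall fun t => (stdphi_pos t).le) integrable_stdphi.integrableOn,
    Function.support_eq_univ fun t => (stdphi_pos t).ne', univ_inter, Real.volume_Ioi]
  exact ENNReal.zero_lt_top

lemma stdphi_sub_eq_mul_exp (μ₁ μ₂ t : ℝ) :
    stdphi (t - μ₂) = stdphi (t - μ₁) * Real.exp ((μ₂ - μ₁) * t + (μ₁ ^ 2 - μ₂ ^ 2) / 2) := by
  unfold stdphi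
  rw [mul_assoc, ← Real.exp_add]
  ring_nf

theorem monotone_Phibar_sub_div_Phibar_sub {c d : ℝ} (hcd : c ≤ d) :
    Monotone fun μ => Phibar (d - μ) / Phibar (c - μ) := by
  intro μ₁ μ₂ hμ
  set tilt : ℝ → ℝ := fun t => Real.exp ((μ₂ - μ₁) * t + (μ₁ ^ 2 - μ₂ ^ 2) / 2)
  have htilt : Monotone tilt :=
    Real.exp_monotone.comp ((monotone_id.const_mul (sub_nonneg.2 hμ)).add_const _)
  have hshift : ∀ x, Phibar (x - μ₂) = ∫ t in Ioi x, stdphi (t - μ₁) * tilt t := fun x => by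
    simp only [tilt, ← stdphi_sub_eq_mul_exp, setIntegral_Ioi_stdphi_sub]
  have hint : Integrable fun t => stdphi (t - μ₁) * tilt t := by
    simpa only [tilt, ← stdphi_sub_eq_mul_exp] using integrable_stdphi_sub μ₂
  rw [div_le_div_iff₀ (Phibar_pos _) (Phibar_pos _), hshift, hshift,
    ← setIntegral_Ioi_stdphi_sub d μ₁, ← setIntegral_Ioi_stdphi_sub c μ₁]
  exact setIntegral_Ioi_mul_setIntegral_Ioi_mul_le hcd (fun t => (stdphi_pos _).le) htilt
    (integrable_stdphi_sub μ₁).integrableOn hint.integrableOn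

/-- File drawer problem: the conditional rejection probability
`ρ(μ) = Φ̄(d−μ)/Φ̄(c−μ)` is nondecreasing in `μ`; consequently, if `Φ̄(d) = αΦ̄(c)`,
the selective test rejecting when `Y > d` conditional on selection `{Y > c}` is
unbiased: `ρ(μ) ≤ α` for `μ ≤ 0`, `ρ(μ) ≥ α` for `μ ≥ 0`, and `ρ(0) = α`. -/
theorem stmt_1 (c d : ℝ) (hcd : c ≤ d) :
    Monotone (fun μ : ℝ => Phibar (d - μ) / Phibar (c - μ)) ∧
    ∀ α : ℝ, α ∈ Set.Ioo (0 : ℝ) 1 → Phibar d = α * Phibar c →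
      (∀ μ : ℝ, μ ≤ 0 → Phibar (d - μ) / Phibar (c - μ) ≤ α) ∧
      (∀ μ : ℝ, 0 ≤ μ → α ≤ Phibar (d - μ) / Phibar (c - μ)) ∧
      Phibar (d - 0) / Phibar (c - 0) = α := by
  have hmono := monotone_Phibar_sub_div_Phibar_sub hcd
  refine ⟨hmono, fun α _ hdc => ?_⟩
  have h0 : Phibar (d - 0) / Phibar (c - 0) = α := by
    rw [sub_zero, sub_zero, hdc, mul_div_cancel_right₀ _ (Phibar_pos c).ne']
  exact ⟨fun μ hμ => h0 ▸ hmono hμ, fun μ hμ => h0 ▸ hmono hμ, h0⟩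
end

section
/- Let m ∈ ℕ, α ∈ (0,1), v_s ∈ ℝ; let v_r be the unique real number with Φ̄(v_r) = α Φ̄(v_s), and set A := Φ̄(v_r)φ(v_s)/(φ(v_r)Φ̄(v_s)) = αφ(v_s)/φ(v_r). Let h̃, s̃ : ℝ^m → ℂ be integrable, and define h := F^{-1}h̃ and s := F^{-1}s̃. Let (I_k)_{k≥1} and (J_k)_{k≥1} be measurable functions ℝ^m → ℂ satisfying: (i) for each ω, I_k(ω) → 0 and J_k(ω) → 0 as k → ∞; (ii) there is a constant D with |I_k(ω)| ≤ D and |J_k(ω)| ≤ D for all k and ω; (iii) for each k, sup_ω |e^{‖ω‖²/2} I_k(ω)| < ∞ and sup_ω |(1 − A − J_k(ω)) e^{‖ω‖²/2}| < ∞. Then: (a) for each k, the function r̃_k(ω) := (1 − A − J_k(ω)) e^{‖ω‖²/2} h̃(ω) + (A − e^{‖ω‖²/2} I_k(ω)) s̃(ω) is integrable, so r_k := F^{-1}r̃_k exists and is bounded and continuous; (b) with E₁f(θ) := E[f(U_θ)] for U_θ of law N(θ, I_m), for every θ ∈ ℝ^m the selective-inference bias satisfies h(θ) − E₁r_k(θ)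 − A·(h(θ) − E₁s(θ)) = (2π)^{-m} ∫_{ℝ^m} e^{i⟨ω,θ⟩} (J_k(ω)h̃(ω) + I_k(ω)s̃(ω)) dω, and this quantity converges to 0 as k → ∞. -/
open MeasureTheory ProbabilityTheory Set Filter
open scoped NNReal

/-- The Gaussian measure `N(μ, σ² I_m)` on `ℝ^m` as a product of one-dimensional
Gaussian measures. -/
noncomputable def gaussianPi {m : ℕ} (μ : Fin m → ℝ) (v : ℝ≥0) :
    Measure (Fin m → ℝ) :=
  Measure.pi fun i => gaussianReal (μ i) v

/-- The inverse Fourier transform with the angular-frequency convention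
`(F⁻¹ f̃)(u) = (2π)^{-m} ∫ e^{i⟨ω,u⟩} f̃(ω) dω`. -/
noncomputable def Finv {m : ℕ} (f : (Fin m → ℝ) → ℂ) (u : Fin m → ℝ) : ℂ :=
  (((2 * Real.pi) ^ m)⁻¹ : ℝ) •
    ∫ ω : Fin m → ℝ, Complex.exp (Complex.I * ((∑ i, ω i * u i : ℝ) : ℂ)) * f ω

/-!
Write `F⁻¹` as integration against the kernel `e^{i⟨ω,u⟩}`, which has modulus one. Averaging
`F⁻¹ f` over `N(θ, v I)` therefore commutes with the `ω`-integral (Fubini), and the Gaussian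
characteristic function turns the average into `F⁻¹ (e^{-v‖ω‖²/2} f)(θ)`. For `v = 1` this damping
cancels the growth factor `e^{‖ω‖²/2}` in `r̃_k`, so by linearity the bias collapses to
`F⁻¹ (J_k h̃ + I_k s̃)(θ)`; dominated convergence, with dominating function `D (‖h̃‖ + ‖s̃‖)`,
sends it to `0`.
-/

section

open Complex Topology

variable {m : ℕ}

noncomputable def fourierKernel (u ω : Fin m → ℝ) : ℂ :=
  cexp (I * ((∑ i, ω i * u i : ℝ) : ℂ))

noncomputable def gaussWeight (v : ℝ≥0) (ω : Fin m → ℝ) : ℂ :=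
  ((Real.exp (-(v * ∑ i, ω i ^ 2) / 2) : ℝ) : ℂ)

lemma Finv_eq (f : (Fin m → ℝ) → ℂ) (u : Fin m → ℝ) :
    Finv f u = (((2 * Real.pi) ^ m)⁻¹ : ℝ) • ∫ ω, fourierKernel u ω * f ω := rfl

lemma norm_fourierKernel (u ω : Fin m → ℝ) : ‖fourierKernel u ω‖ = 1 := by
  simp [fourierKernel, Complex.norm_exp]

lemma continuous_fourierKernel :
    Continuous fun p : (Fin m → ℝ) × (Fin m → ℝ) => fourierKernel p.1 p.2 := by
  unfold fourierKernel
  fun_prop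

lemma norm_gaussWeight_le_one (v : ℝ≥0) (ω : Fin m → ℝ) : ‖gaussWeight v ω‖ ≤ 1 := by
  rw [gaussWeight, Complex.norm_real, Real.norm_of_nonneg (Real.exp_nonneg _), Real.exp_le_one_iff]
  have : 0 ≤ (v : ℝ) * ∑ i, ω i ^ 2 := by positivity
  linarith

lemma continuous_gaussWeight (v : ℝ≥0) : Continuous (gaussWeight (m := m) v) := by
  unfold gaussWeight
  fun_prop

lemma gaussWeight_one_mul_exp (ω : Fin m → ℝ) :
    gaussWeight 1 ω * ((Real.exp ((∑ i, ω i ^ 2) / 2) : ℝ) : ℂ) = 1 := by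
  rw [gaussWeight, ← ofReal_mul, ← Real.exp_add, NNReal.coe_one, one_mul, neg_div,
    neg_add_cancel, Real.exp_zero, ofReal_one]

lemma MeasureTheory.Integrable.fourierKernel_mul {f : (Fin m → ℝ) → ℂ} (hf : Integrable f)
    (u : Fin m → ℝ) : Integrable fun ω => fourierKernel u ω * f ω :=
  hf.bdd_mul (continuous_fourierKernel.comp (Continuous.prodMk_right u)).aestronglyMeasurable
    (.of_forall fun ω => (norm_fourierKernel u ω).le)

lemma MeasureTheory.Integrable.gaussWeight_mul {f : (Fin m → ℝ) → ℂ} (hf : Integrable f)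
    (v : ℝ≥0) : Integrable fun ω => gaussWeight v ω * f ω :=
  hf.bdd_mul (continuous_gaussWeight v).aestronglyMeasurable
    (.of_forall (norm_gaussWeight_le_one v))

lemma continuous_Finv {f : (Fin m → ℝ) → ℂ} (hf : Integrable f) : Continuous (Finv f) := by
  simp_rw [funext (Finv_eq f)]
  refine .fun_const_smul (continuous_of_dominated (bound := fun ω => ‖f ω‖)
    (fun u => (hf.fourierKernel_mul u).aestronglyMeasurable) (fun u => .of_forall fun ω => ?_)
    hf.norm (.of_forall fun ω => ?_)) _
  · rw [norm_mul, norm_fourierKernel, one_mul]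
  · exact (continuous_fourierKernel.comp (Continuous.prodMk_left ω)).mul continuous_const

lemma norm_Finv_le (f : (Fin m → ℝ) → ℂ) (u : Fin m → ℝ) :
    ‖Finv f u‖ ≤ ((2 * Real.pi) ^ m)⁻¹ * ∫ ω, ‖f ω‖ := by
  rw [Finv_eq, norm_smul, Real.norm_of_nonneg (by positivity)]
  gcongr
  refine (norm_integral_le_integral_norm _).trans_eq (integral_congr_ae (.of_forall fun ω => ?_))
  simp [norm_fourierKernel]

lemma Finv_zero (u : Fin m → ℝ) : Finv (fun _ => 0) u = 0 := by
  simp [Finv_eq]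

lemma Finv_sub {f g : (Fin m → ℝ) → ℂ} (hf : Integrable f) (hg : Integrable g)
    (u : Fin m → ℝ) : Finv (fun ω => f ω - g ω) u = Finv f u - Finv g u := by
  simp only [Finv_eq, mul_sub, integral_sub (hf.fourierKernel_mul u) (hg.fourierKernel_mul u),
    smul_sub]

lemma Finv_const_mul (c : ℂ) (f : (Fin m → ℝ) → ℂ) (u : Fin m → ℝ) :
    Finv (fun ω => c * f ω) u = c * Finv f u := by
  simp only [Finv_eq, mul_left_comm _ c, integral_const_mul, mul_smul_comm]

lemma integral_fourierKernel_gaussianPi (θ ω : Fin m → ℝ) (v : ℝ≥0) :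
    ∫ x, fourierKernel x ω ∂gaussianPi θ v = fourierKernel θ ω * gaussWeight v ω := by
  have hprod : ∀ x, fourierKernel x ω = ∏ i, cexp (ω i * x i * I) := fun x => by
    rw [fourierKernel, ← exp_sum]
    push_cast
    rw [Finset.mul_sum]
    exact congrArg cexp (Finset.sum_congr rfl fun i _ => by ring)
  simp_rw [hprod, gaussianPi]
  rw [integral_fintype_prod_eq_prod (fun i (y : ℝ) => cexp (ω i * y * I))]
  simp_rw [← charFun_apply_real, charFun_gaussianReal, ← exp_sum, gaussWeight, ofReal_exp,
    ← exp_add]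
  push_cast
  rw [Finset.sum_sub_distrib, Finset.mul_sum, neg_div, Finset.sum_div, sub_eq_add_neg]

instance isProbabilityMeasure_gaussianPi (θ : Fin m → ℝ) (v : ℝ≥0) :
    IsProbabilityMeasure (gaussianPi θ v) := by
  unfold gaussianPi
  infer_instance

lemma integral_Finv_gaussianPi {f : (Fin m → ℝ) → ℂ} (hf : Integrable f) (θ : Fin m → ℝ)
    (v : ℝ≥0) : ∫ x, Finv f x ∂gaussianPi θ v = Finv (fun ω => gaussWeight v ω * f ω) θ := by
  have hint : Integrable (fun p : (Fin m → ℝ) × (Fin m → ℝ) => fourierKernel p.1 p.2 * f p.2)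
      ((gaussianPi θ v).prod volume) :=
    (hf.comp_snd _).bdd_mul continuous_fourierKernel.aestronglyMeasurable
      (.of_forall fun p => (norm_fourierKernel p.1 p.2).le)
  simp_rw [Finv_eq]
  rw [integral_smul, integral_integral_swap hint]
  simp_rw [integral_mul_const, integral_fourierKernel_gaussianPi, mul_assoc]

lemma tendsto_Finv_of_dominated {ι : Type*} {l : Filter ι} [l.IsCountablyGenerated]
    {F : ι → (Fin m → ℝ) → ℂ} {f : (Fin m → ℝ) → ℂ} (bound : (Fin m → ℝ) → ℝ)
    (hF_meas : ∀ᶠ k in l, AEStronglyMeasurable (F k)) (h_bound : ∀ᶠ k in l, ∀ ω, ‖F k ω‖ ≤ bound ω)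
    (bound_integrable : Integrable bound) (h_lim : ∀ ω, Tendsto (fun k => F k ω) l (nhds (f ω)))
    (u : Fin m → ℝ) : Tendsto (fun k => Finv (F k) u) l (nhds (Finv f u)) := by
  simp_rw [Finv_eq]
  refine .const_smul (tendsto_integral_filter_of_dominated_convergence bound ?_ ?_
    bound_integrable (.of_forall fun ω => (h_lim ω).const_mul _)) _
  · filter_upwards [hF_meas] with k hk
    exact (continuous_fourierKernel.comp (Continuous.prodMk_right u)).aestronglyMeasurable.mul hk
  · filter_upwards [h_bound] with k hk
    exact .of_forall fun ω => by rw [norm_mul, norm_fourierKernel, one_mul]; exact hk ω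

lemma tendsto_Finv_mul_add_mul_zero {ι : Type*} {l : Filter ι} [l.IsCountablyGenerated]
    {h s : (Fin m → ℝ) → ℂ} {a b : ι → (Fin m → ℝ) → ℂ} (hh : Integrable h) (hs : Integrable s)
    (ha : ∀ k, Measurable (a k)) (hb : ∀ k, Measurable (b k)) {D : ℝ}
    (hab : ∀ k ω, ‖a k ω‖ ≤ D ∧ ‖b k ω‖ ≤ D) (ha_lim : ∀ ω, Tendsto (a · ω) l (𝓝 0))
    (hb_lim : ∀ ω, Tendsto (b · ω) l (𝓝 0)) (u : Fin m → ℝ) :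
    Tendsto (fun k => Finv (fun ω => a k ω * h ω + b k ω * s ω) u) l (𝓝 0) := by
  have hdom : ∀ k ω, ‖a k ω * h ω + b k ω * s ω‖ ≤ D * (‖h ω‖ + ‖s ω‖) := fun k ω =>
    calc ‖a k ω * h ω + b k ω * s ω‖ ≤ ‖a k ω‖ * ‖h ω‖ + ‖b k ω‖ * ‖s ω‖ :=
          (norm_add_le _ _).trans (by rw [norm_mul, norm_mul])
      _ ≤ D * (‖h ω‖ + ‖s ω‖) := by
          rw [mul_add]; gcongr; exacts [(hab k ω).1, (hab k ω).2]
  rw [← Finv_zero u]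
  exact tendsto_Finv_of_dominated (fun ω => D * (‖h ω‖ + ‖s ω‖))
    (.of_forall fun k => by fun_prop) (.of_forall (hdom ·)) ((hh.norm.add hs.norm).const_mul D)
    (fun ω => by simpa using ((ha_lim ω).mul_const (h ω)).add ((hb_lim ω).mul_const (s ω))) u

noncomputable def selectiveBias (A : ℂ) (h r s : (Fin m → ℝ) → ℂ) (θ : Fin m → ℝ) : ℂ :=
  Finv h θ - ∫ x, Finv r x ∂gaussianPi θ 1 - A * (Finv h θ - ∫ x, Finv s x ∂gaussianPi θ 1)

lemma selectiveBias_eq_Finv {h r s a b : (Fin m → ℝ) → ℂ} (A : ℂ) (hh : Integrable h)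
    (hs : Integrable s) (hr : Integrable r)
    (hr_eq : ∀ ω, gaussWeight 1 ω * r ω = (1 - A - a ω) * h ω + (A * gaussWeight 1 ω - b ω) * s ω)
    (θ : Fin m → ℝ) :
    selectiveBias A h r s θ = Finv (fun ω => a ω * h ω + b ω * s ω) θ := by
  have hr' : Integrable fun ω => h ω - gaussWeight 1 ω * r ω := hh.sub (hr.gaussWeight_mul 1)
  have hs' : Integrable fun ω => h ω - gaussWeight 1 ω * s ω := hh.sub (hs.gaussWeight_mul 1)
  rw [selectiveBias, integral_Finv_gaussianPi hr, integral_Finv_gaussianPi hs,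
    ← Finv_sub hh (hr.gaussWeight_mul 1), ← Finv_sub hh (hs.gaussWeight_mul 1), ← Finv_const_mul,
    ← Finv_sub hr' (hs'.const_mul A)]
  congr 1
  funext ω
  rw [hr_eq]
  ring

end

theorem stmt_13_general (m : ℕ) (α vs : ℝ)
    (vr : ℝ)
    (ht hs : (Fin m → ℝ) → ℂ) (hti : Integrable ht) (hsi : Integrable hs)
    (I J : ℕ → (Fin m → ℝ) → ℂ)
    (hImeas : ∀ k, Measurable (I k)) (hJmeas : ∀ k, Measurable (J k))
    (hIlim : ∀ ω, Tendsto (fun k => I k ω) atTop (nhds 0))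
    (hJlim : ∀ ω, Tendsto (fun k => J k ω) atTop (nhds 0))
    (hbdd : ∃ D : ℝ, ∀ k ω, ‖I k ω‖ ≤ D ∧ ‖J k ω‖ ≤ D)
    (hIgrow : ∀ k, ∃ M : ℝ, ∀ ω : Fin m → ℝ,
      Real.exp ((∑ i, ω i ^ 2) / 2) * ‖I k ω‖ ≤ M)
    (hJgrow : ∀ k, ∃ M : ℝ, ∀ ω : Fin m → ℝ,
      ‖(1 : ℂ) - ((α * stdphi vs / stdphi vr : ℝ) : ℂ) - J k ω‖
        * Real.exp ((∑ i, ω i ^ 2) / 2) ≤ M) :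
    let A : ℂ := ((α * stdphi vs / stdphi vr : ℝ) : ℂ)
    let rt : ℕ → (Fin m → ℝ) → ℂ := fun k ω =>
      (1 - A - J k ω) * ((Real.exp ((∑ i, ω i ^ 2) / 2) : ℝ) : ℂ) * ht ω
        + (A - ((Real.exp ((∑ i, ω i ^ 2) / 2) : ℝ) : ℂ) * I k ω) * hs ω
    (∀ k, Integrable (rt k)) ∧
    (∀ k, Continuous (Finv (rt k))) ∧
    (∀ k, ∃ M : ℝ, ∀ u, ‖Finv (rt k) u‖ ≤ M) ∧
    (∀ θ : Fin m → ℝ,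
      (∀ k : ℕ,
        Finv ht θ - (∫ x, Finv (rt k) x ∂(gaussianPi θ 1))
          - A * (Finv ht θ - ∫ x, Finv hs x ∂(gaussianPi θ 1))
        = Finv (fun ω => J k ω * ht ω + I k ω * hs ω) θ) ∧
      Tendsto (fun k : ℕ =>
          Finv ht θ - (∫ x, Finv (rt k) x ∂(gaussianPi θ 1))
            - A * (Finv ht θ - ∫ x, Finv hs x ∂(gaussianPi θ 1)))
        atTop (nhds 0)) := by
  intro A rt
  obtain ⟨D, hD⟩ := hbdd
  have hexp_norm : ∀ ω : Fin m → ℝ,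
      ‖((Real.exp ((∑ i, ω i ^ 2) / 2) : ℝ) : ℂ)‖ = Real.exp ((∑ i, ω i ^ 2) / 2) := fun ω => by
    rw [Complex.norm_real, Real.norm_of_nonneg (Real.exp_nonneg _)]
  have hrt : ∀ k, Integrable (rt k) := fun k => by
    obtain ⟨M₁, hM₁⟩ := hJgrow k
    obtain ⟨M₂, hM₂⟩ := hIgrow k
    refine .add (hti.bdd_mul (c := M₁) (by fun_prop) (.of_forall fun ω => ?_))
      (hsi.bdd_mul (c := ‖A‖ + M₂) (by fun_prop) (.of_forall fun ω => ?_))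
    · rw [norm_mul, hexp_norm]
      exact hM₁ ω
    · refine (norm_sub_le _ _).trans ?_
      rw [norm_mul, hexp_norm]
      exact add_le_add_right (hM₂ ω) _
  have hbias : ∀ θ k, selectiveBias A ht (rt k) hs θ =
      Finv (fun ω => J k ω * ht ω + I k ω * hs ω) θ := fun θ k =>
    selectiveBias_eq_Finv A hti hsi (hrt k) (fun ω => by
      linear_combination ((1 - A - J k ω) * ht ω - I k ω * hs ω) * gaussWeight_one_mul_exp ω) θ
  refine ⟨hrt, fun k => continuous_Finv (hrt k), fun k => ⟨_, norm_Finv_le (rt k)⟩,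
    fun θ => ⟨hbias θ, ?_⟩⟩
  change Tendsto (fun k => selectiveBias A ht (rt k) hs θ) atTop (nhds 0)
  simp_rw [hbias θ]
  exact tendsto_Finv_mul_add_mul_zero hti hsi hJmeas hImeas (fun k ω => (hD k ω).symm) hJlim hIlim θ

/-- Theorem 5 (core bias computation for general approximately unbiased selective
p-values): with `A = αφ(v_s)/φ(v_r)` and correction functions `I_k, J_k` satisfying
(i) pointwise vanishing, (ii) uniform boundedness, (iii) Gaussian-growth control,
the spectrum `r̃_k = (1−A−J_k)e^{‖ω‖²/2}h̃ + (A − e^{‖ω‖²/2}I_k)s̃` is integrable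
(so `r_k = F⁻¹ r̃_k` exists and is bounded continuous), and the selective-inference
bias `h(θ) − E₁r_k(θ) − A(h(θ) − E₁s(θ))` equals `F⁻¹[J_k h̃ + I_k s̃](θ)` and
vanishes as `k → ∞`. -/
theorem stmt_13 (m : ℕ) (α vs : ℝ) (hα : α ∈ Set.Ioo (0 : ℝ) 1)
    (vr : ℝ) (hvr : Phibar vr = α * Phibar vs)
    (ht hs : (Fin m → ℝ) → ℂ) (hti : Integrable ht) (hsi : Integrable hs)
    (I J : ℕ → (Fin m → ℝ) → ℂ)
    (hImeas : ∀ k, Measurable (I k)) (hJmeas : ∀ k, Measurable (J k))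
    (hIlim : ∀ ω, Tendsto (fun k => I k ω) atTop (nhds 0))
    (hJlim : ∀ ω, Tendsto (fun k => J k ω) atTop (nhds 0))
    (hbdd : ∃ D : ℝ, ∀ k ω, ‖I k ω‖ ≤ D ∧ ‖J k ω‖ ≤ D)
    (hIgrow : ∀ k, ∃ M : ℝ, ∀ ω : Fin m → ℝ,
      Real.exp ((∑ i, ω i ^ 2) / 2) * ‖I k ω‖ ≤ M)
    (hJgrow : ∀ k, ∃ M : ℝ, ∀ ω : Fin m → ℝ,
      ‖(1 : ℂ) - ((α * stdphi vs / stdphi vr : ℝ) : ℂ) - J k ω‖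
        * Real.exp ((∑ i, ω i ^ 2) / 2) ≤ M) :
    let A : ℂ := ((α * stdphi vs / stdphi vr : ℝ) : ℂ)
    let rt : ℕ → (Fin m → ℝ) → ℂ := fun k ω =>
      (1 - A - J k ω) * ((Real.exp ((∑ i, ω i ^ 2) / 2) : ℝ) : ℂ) * ht ω
        + (A - ((Real.exp ((∑ i, ω i ^ 2) / 2) : ℝ) : ℂ) * I k ω) * hs ω
    (∀ k, Integrable (rt k)) ∧
    (∀ k, Continuous (Finv (rt k))) ∧
    (∀ k, ∃ M : ℝ, ∀ u, ‖Finv (rt k) u‖ ≤ M) ∧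
    (∀ θ : Fin m → ℝ,
      (∀ k : ℕ,
        Finv ht θ - (∫ x, Finv (rt k) x ∂(gaussianPi θ 1))
          - A * (Finv ht θ - ∫ x, Finv hs x ∂(gaussianPi θ 1))
        = Finv (fun ω => J k ω * ht ω + I k ω * hs ω) θ) ∧
      Tendsto (fun k : ℕ =>
          Finv ht θ - (∫ x, Finv (rt k) x ∂(gaussianPi θ 1))
            - A * (Finv ht θ - ∫ x, Finv hs x ∂(gaussianPi θ 1)))
        atTop (nhds 0)) :=
  stmt_13_general m α vs vr ht hs hti hsi I J hImeas hJmeas hIlim hJlim hbdd hIgrow hJgrow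
end

section
/- Let m ∈ ℕ, u ∈ ℝ^m, and let h̃ : ℝ^m → ℂ be measurable with ω ↦ e^{‖ω‖²/2} h̃(ω) integrable. Define F : (0,∞) → ℂ by F(τ) := (2π)^{-m} ∫ e^{i⟨ω,u⟩} e^{-τ‖ω‖²/2} h̃(ω) dω. Then F is infinitely differentiable on (0,∞) with j-th derivative F^{(j)}(τ) = (2π)^{-m} ∫ e^{i⟨ω,u⟩} (−‖ω‖²/2)^j e^{-τ‖ω‖²/2} h̃(ω) dω, and for every integer k ≥ 1 and every τ₀ > 0, the k-term Taylor polynomial of F at τ₀ evaluated at the extrapolation point τ = −1 has the closed form: ∑_{j=0}^{k-1} ((−1 − τ₀)^j / j!) F^{(j)}(τ₀) = (2π)^{-m} ∫ e^{i⟨ω,u⟩} e^{‖ω‖²/2} (1 − γ(k, (1+τ₀)‖ω‖²/2)/(k−1)!) h̃(ω) dω, where γ(k,z) := ∫_0^z t^{k-1} e^{-t} dt is the lower incomplete gamma function, the factor 1 − γ(k,·)/(k−1)! lies in [0,1], and the integrand on the right-hand side is integrable. -/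
/-!
Every `τ`-derivative of `∫ (-q)^j e^{-τ q} f` inserts one more factor `-q`, and for `τ > -1`
the bound `q^j e^{-(τ+1) q} ≤ j!/(τ+1)^j` turns the single hypothesis `e^{q} f ∈ L¹` into a
dominating function, so differentiation under the integral sign is legitimate. The Taylor sum
at `τ₀` evaluated at `-1` can then be taken inside the integral, where it equals
`e^{q} · e^{-z} ∑_{j<k} z^j/j!` with `z = (1+τ₀) q`. Finally
`e^{-z} ∑_{j<k} z^j/j! = 1 - γ(k,z)/(k-1)!`, since both sides equal `1` at `z = 0` and have
derivative `-z^{k-1} e^{-z}/(k-1)!`. Here `q = ‖ω‖²/2` and `f = e^{i⟨ω,u⟩} h̃`.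
-/

open MeasureTheory Set

/-- The lower incomplete gamma function `γ(k, z) = ∫_0^z t^{k-1} e^{-t} dt`
(for positive integer `k`). -/
noncomputable def lowerGamma (k : ℕ) (z : ℝ) : ℝ :=
  ∫ t in Set.Ioc (0 : ℝ) z, t ^ (k - 1) * Real.exp (-t)

open Filter
open scoped Nat

theorem hasDerivAt_sum_range_pow_div_factorial (n : ℕ) (x : ℝ) :
    HasDerivAt (fun y : ℝ => ∑ j ∈ Finset.range (n + 1), y ^ j / j !)
      (∑ j ∈ Finset.range n, x ^ j / j !) x := by
  induction n with
  | zero => simpa using hasDerivAt_const x (1 : ℝ)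
  | succ n ih =>
    have hterm : HasDerivAt (fun y : ℝ => y ^ (n + 1) / (n + 1)!) (x ^ n / n !) x := by
      refine ((hasDerivAt_pow (n + 1) x).div_const _).congr_deriv ?_
      rw [Nat.factorial_succ]
      push_cast
      field_simp
    simp only [Finset.sum_range_succ _ (n + 1)]
    rw [Finset.sum_range_succ _ n]
    exact ih.add hterm

theorem lowerGamma_succ (n : ℕ) {z : ℝ} (hz : 0 ≤ z) :
    lowerGamma (n + 1) z =
      n ! * (1 - Real.exp (-z) * ∑ j ∈ Finset.range (n + 1), z ^ j / j !) := by
  have hderiv : ∀ x : ℝ, HasDerivAt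
      (fun y => n ! * (1 - Real.exp (-y) * ∑ j ∈ Finset.range (n + 1), y ^ j / j !))
      (x ^ n * Real.exp (-x)) x := by
    intro x
    refine (((hasDerivAt_neg x).exp.mul
      (hasDerivAt_sum_range_pow_div_factorial n x)).const_sub 1).const_mul (n ! : ℝ)
      |>.congr_deriv ?_
    rw [Finset.sum_range_succ]
    field_simp
    ring
  rw [lowerGamma, Nat.add_sub_cancel, ← intervalIntegral.integral_of_le hz,
    intervalIntegral.integral_eq_sub_of_hasDerivAt (fun x _ => hderiv x)
      ((by fun_prop : Continuous fun t : ℝ => t ^ n * Real.exp (-t)).intervalIntegrable 0 z)]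
  simp [Finset.sum_range_succ']

theorem one_sub_lowerGamma_div_factorial {k : ℕ} (hk : 1 ≤ k) {z : ℝ} (hz : 0 ≤ z) :
    1 - lowerGamma k z / (k - 1)! = Real.exp (-z) * ∑ j ∈ Finset.range k, z ^ j / j ! := by
  obtain ⟨n, rfl⟩ := Nat.exists_eq_add_of_le' hk
  rw [lowerGamma_succ n hz, Nat.add_sub_cancel]
  field_simp
  ring

theorem one_sub_lowerGamma_div_factorial_mem_Icc {k : ℕ} (hk : 1 ≤ k) {z : ℝ} (hz : 0 ≤ z) :
    1 - lowerGamma k z / (k - 1)! ∈ Icc (0 : ℝ) 1 := by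
  rw [one_sub_lowerGamma_div_factorial hk hz]
  refine ⟨by positivity, ?_⟩
  calc Real.exp (-z) * ∑ j ∈ Finset.range k, z ^ j / j !
      ≤ Real.exp (-z) * Real.exp z := by gcongr; exact Real.sum_le_exp_of_nonneg hz k
    _ = 1 := by rw [← Real.exp_add, neg_add_cancel, Real.exp_zero]

theorem pow_mul_exp_neg_mul_le {a x : ℝ} (ha : 0 < a) (hx : 0 ≤ x) (n : ℕ) :
    x ^ n * Real.exp (-(a * x)) ≤ n ! / a ^ n :=
  calc x ^ n * Real.exp (-(a * x))
      = (a * x) ^ n / n ! * Real.exp (-(a * x)) * (n ! / a ^ n) := by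
        field_simp
        ring
    _ ≤ Real.exp (a * x) * Real.exp (-(a * x)) * (n ! / a ^ n) := by
        gcongr
        exact Real.pow_div_factorial_le_exp _ (by positivity) n
    _ = n ! / a ^ n := by rw [← Real.exp_add, add_neg_cancel, Real.exp_zero, one_mul]

section DampedIntegral

variable {α : Type*} {q : α → ℝ} {f : α → ℂ}

noncomputable def dampedIntegrand (q : α → ℝ) (f : α → ℂ) (j : ℕ) (τ : ℝ) (ω : α) : ℂ :=
  ((-q ω : ℝ) : ℂ) ^ j * (Real.exp (-(τ * q ω)) : ℂ) * f ω

theorem norm_dampedIntegrand_le {ω : α} (hq : 0 ≤ q ω) {a τ : ℝ} (ha : 0 < a)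
    (haτ : a ≤ τ + 1) (j : ℕ) :
    ‖dampedIntegrand q f j τ ω‖ ≤ j ! / a ^ j * ‖Real.exp (q ω) • f ω‖ := by
  have hsplit : Real.exp (-(τ * q ω)) = Real.exp (-((τ + 1) * q ω)) * Real.exp (q ω) := by
    rw [← Real.exp_add]
    ring_nf
  have hnorm : ‖dampedIntegrand q f j τ ω‖ =
      q ω ^ j * Real.exp (-((τ + 1) * q ω)) * (Real.exp (q ω) * ‖f ω‖) := by
    rw [dampedIntegrand, norm_mul, norm_mul, norm_pow, Complex.norm_real, Complex.norm_real,
      Real.norm_eq_abs, Real.norm_eq_abs, abs_neg, abs_of_nonneg hq, Real.abs_exp, hsplit]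
    ring
  rw [hnorm, norm_smul, Real.norm_eq_abs, Real.abs_exp]
  gcongr
  calc q ω ^ j * Real.exp (-((τ + 1) * q ω))
      ≤ q ω ^ j * Real.exp (-(a * q ω)) := by gcongr
    _ ≤ j ! / a ^ j := pow_mul_exp_neg_mul_le ha hq j

theorem hasDerivAt_dampedIntegrand (j : ℕ) (τ : ℝ) (ω : α) :
    HasDerivAt (dampedIntegrand q f j · ω) (dampedIntegrand q f (j + 1) τ ω) τ := by
  have hexp := (((hasDerivAt_id τ).mul_const (q ω)).neg.exp).ofReal_comp
  refine ((hexp.const_mul (((-q ω : ℝ) : ℂ) ^ j)).mul_const (f ω)).congr_deriv ?_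
  simp only [dampedIntegrand, Pi.neg_apply, id]
  push_cast
  ring

theorem sum_taylor_dampedIntegrand {ω : α} (hq : 0 ≤ q ω) {k : ℕ} (hk : 1 ≤ k) {τ₀ : ℝ}
    (hτ₀ : -1 ≤ τ₀) :
    ∑ j ∈ Finset.range k, (((-1 - τ₀) ^ j / j ! : ℝ) : ℂ) * dampedIntegrand q f j τ₀ ω =
      (Real.exp (q ω) : ℂ) * ((1 - lowerGamma k ((1 + τ₀) * q ω) / (k - 1)! : ℝ) : ℂ) * f ω := by
  have hexp : Real.exp (q ω) * Real.exp (-((1 + τ₀) * q ω)) = Real.exp (-(τ₀ * q ω)) := by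
    rw [← Real.exp_add]
    ring_nf
  have hterm : ∀ j, (-1 - τ₀) ^ j * (-q ω) ^ j = ((1 + τ₀) * q ω) ^ j := fun j => by
    rw [← mul_pow]
    ring
  rw [one_sub_lowerGamma_div_factorial hk (by nlinarith), Finset.mul_sum]
  simp only [dampedIntegrand, ← hexp, Complex.ofReal_mul, Finset.mul_sum, Finset.sum_mul,
    Complex.ofReal_sum]
  refine Finset.sum_congr rfl fun j _ => ?_
  rw [← hterm j]
  push_cast
  ring

variable [MeasurableSpace α] {μ : Measure α}

theorem aestronglyMeasurable_dampedIntegrand (hq : Measurable q)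
    (hf : Integrable (fun ω => Real.exp (q ω) • f ω) μ) (j : ℕ) (τ : ℝ) :
    AEStronglyMeasurable (dampedIntegrand q f j τ) μ := by
  have hfactor : Measurable fun ω =>
      ((-q ω : ℝ) : ℂ) ^ j * (Real.exp (-(τ * q ω)) : ℂ) * (Real.exp (-q ω) : ℂ) := by
    fun_prop
  refine (hfactor.aestronglyMeasurable.mul hf.aestronglyMeasurable).congr
    (ae_of_all _ fun ω => ?_)
  have hinv : (Real.exp (-q ω) : ℂ) * Real.exp (q ω) = 1 := by
    rw [← Complex.ofReal_mul, ← Real.exp_add, neg_add_cancel, Real.exp_zero, Complex.ofReal_one]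
  simp only [Pi.mul_apply, dampedIntegrand, Complex.real_smul]
  linear_combination (((-q ω : ℝ) : ℂ) ^ j * (Real.exp (-(τ * q ω)) : ℂ) * f ω) * hinv

theorem integrable_dampedIntegrand (hq : Measurable q) (hq0 : ∀ ω, 0 ≤ q ω)
    (hf : Integrable (fun ω => Real.exp (q ω) • f ω) μ) (j : ℕ) {τ : ℝ} (hτ : -1 < τ) :
    Integrable (dampedIntegrand q f j τ) μ :=
  (hf.norm.const_mul _).mono' (aestronglyMeasurable_dampedIntegrand hq hf j τ)
    (ae_of_all _ fun ω => norm_dampedIntegrand_le (hq0 ω) (by linarith) le_rfl j)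

theorem hasDerivAt_integral_dampedIntegrand (hq : Measurable q) (hq0 : ∀ ω, 0 ≤ q ω)
    (hf : Integrable (fun ω => Real.exp (q ω) • f ω) μ) (j : ℕ) {τ : ℝ} (hτ : -1 < τ) :
    HasDerivAt (fun τ => ∫ ω, dampedIntegrand q f j τ ω ∂μ)
      (∫ ω, dampedIntegrand q f (j + 1) τ ω ∂μ) τ := by
  have hr : 0 < (τ + 1) / 2 := by linarith
  have hball : ∀ x ∈ Metric.ball τ ((τ + 1) / 2), (τ + 1) / 2 ≤ x + 1 := fun x hx => by
    linarith [(abs_lt.mp (Real.dist_eq x τ ▸ Metric.mem_ball.mp hx)).1]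
  exact (hasDerivAt_integral_of_dominated_loc_of_deriv_le (Metric.ball_mem_nhds τ hr)
    (Eventually.of_forall (aestronglyMeasurable_dampedIntegrand hq hf j))
    (integrable_dampedIntegrand hq hq0 hf j hτ)
    (aestronglyMeasurable_dampedIntegrand hq hf (j + 1) τ)
    (ae_of_all _ fun ω x hx => norm_dampedIntegrand_le (hq0 ω) hr (hball x hx) (j + 1))
    (hf.norm.const_mul _)
    (ae_of_all _ fun ω x _ => hasDerivAt_dampedIntegrand j x ω)).2

theorem sum_taylor_integral_dampedIntegrand (hq : Measurable q) (hq0 : ∀ ω, 0 ≤ q ω)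
    (hf : Integrable (fun ω => Real.exp (q ω) • f ω) μ) {k : ℕ} (hk : 1 ≤ k) {τ₀ : ℝ}
    (hτ₀ : -1 < τ₀) :
    ∑ j ∈ Finset.range k, (((-1 - τ₀) ^ j / j ! : ℝ) : ℂ) * ∫ ω, dampedIntegrand q f j τ₀ ω ∂μ =
      ∫ ω, (Real.exp (q ω) : ℂ) * ((1 - lowerGamma k ((1 + τ₀) * q ω) / (k - 1)! : ℝ) : ℂ)
        * f ω ∂μ := by
  simp_rw [← integral_const_mul]
  rw [← integral_finsetSum _ fun j _ => (integrable_dampedIntegrand hq hq0 hf j hτ₀).const_mul _]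
  exact integral_congr_ae (ae_of_all _ fun ω => sum_taylor_dampedIntegrand (hq0 ω) hk hτ₀.le)

theorem integrable_exp_mul_one_sub_lowerGamma (hq : Measurable q) (hq0 : ∀ ω, 0 ≤ q ω)
    (hf : Integrable (fun ω => Real.exp (q ω) • f ω) μ) {k : ℕ} (hk : 1 ≤ k) {τ₀ : ℝ}
    (hτ₀ : -1 < τ₀) :
    Integrable (fun ω => (Real.exp (q ω) : ℂ) *
      ((1 - lowerGamma k ((1 + τ₀) * q ω) / (k - 1)! : ℝ) : ℂ) * f ω) μ :=
  (integrable_finsetSum _ fun j _ =>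
    (integrable_dampedIntegrand hq hq0 hf j hτ₀).const_mul _).congr
    (ae_of_all _ fun ω => sum_taylor_dampedIntegrand (hq0 ω) hk hτ₀.le)

end DampedIntegral

theorem stmt_16_general (m : ℕ) (u : Fin m → ℝ) (ht : (Fin m → ℝ) → ℂ)
    (hint : Integrable (fun ω : Fin m → ℝ =>
      Real.exp ((∑ i, ω i ^ 2) / 2) • ht ω)) :
    let G : ℕ → ℝ → ℂ := fun j τ =>
      (((2 * Real.pi) ^ m)⁻¹ : ℝ) •
        ∫ ω : Fin m → ℝ,
          Complex.exp (Complex.I * ((∑ i, ω i * u i : ℝ) : ℂ))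
            * ((-(∑ i, ω i ^ 2) / 2 : ℝ) : ℂ) ^ j
            * ((Real.exp (-(τ * (∑ i, ω i ^ 2)) / 2) : ℝ) : ℂ) * ht ω
    (∀ j : ℕ, ∀ τ : ℝ, 0 < τ → HasDerivAt (G j) (G (j + 1) τ) τ) ∧
    (∀ k : ℕ, 1 ≤ k → ∀ τ₀ : ℝ, 0 < τ₀ →
      (∑ j ∈ Finset.range k, (((-1 - τ₀) ^ j / j.factorial : ℝ) : ℂ) * G j τ₀)
        = (((2 * Real.pi) ^ m)⁻¹ : ℝ) •
          ∫ ω : Fin m → ℝ,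
            Complex.exp (Complex.I * ((∑ i, ω i * u i : ℝ) : ℂ))
              * ((Real.exp ((∑ i, ω i ^ 2) / 2) : ℝ) : ℂ)
              * ((1 - lowerGamma k ((1 + τ₀) * (∑ i, ω i ^ 2) / 2)
                    / (k - 1).factorial : ℝ) : ℂ)
              * ht ω) ∧
    (∀ k : ℕ, 1 ≤ k → ∀ z : ℝ, 0 ≤ z →
      1 - lowerGamma k z / (k - 1).factorial ∈ Set.Icc (0 : ℝ) 1) ∧
    (∀ k : ℕ, 1 ≤ k → ∀ τ₀ : ℝ, 0 < τ₀ →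
      Integrable (fun ω : Fin m → ℝ =>
        Complex.exp (Complex.I * ((∑ i, ω i * u i : ℝ) : ℂ))
          * ((Real.exp ((∑ i, ω i ^ 2) / 2) : ℝ) : ℂ)
          * ((1 - lowerGamma k ((1 + τ₀) * (∑ i, ω i ^ 2) / 2)
                / (k - 1).factorial : ℝ) : ℂ)
          * ht ω)) := by
  intro G
  set q : (Fin m → ℝ) → ℝ := fun ω => (∑ i, ω i ^ 2) / 2
  set f : (Fin m → ℝ) → ℂ := fun ω =>
    Complex.exp (Complex.I * ((∑ i, ω i * u i : ℝ) : ℂ)) * ht ω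
  have hq : Measurable q := by fun_prop
  have hq0 : ∀ ω, 0 ≤ q ω := fun ω => by positivity
  have hf : Integrable (fun ω => Real.exp (q ω) • f ω) := by
    refine (hint.bdd_mul (c := 1)
      (f := fun ω => Complex.exp (Complex.I * ((∑ i, ω i * u i : ℝ) : ℂ)))
      (Measurable.aestronglyMeasurable (by fun_prop))
      (ae_of_all _ fun ω => (Complex.norm_exp_I_mul_ofReal _).le)).congr
      (ae_of_all _ fun ω => ?_)
    simp only [q, f, mul_smul_comm]
  have hG : G = fun j τ => (((2 * Real.pi) ^ m)⁻¹ : ℝ) • ∫ ω, dampedIntegrand q f j τ ω := by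
    funext j τ
    simp only [G, dampedIntegrand, q, f, neg_div, mul_div_assoc]
    congr 2 with ω
    ring
  refine ⟨fun j τ hτ => ?_, fun k hk τ₀ hτ₀ => ?_,
    fun k hk z hz => one_sub_lowerGamma_div_factorial_mem_Icc hk hz, fun k hk τ₀ hτ₀ => ?_⟩
  · rw [hG]
    exact (hasDerivAt_integral_dampedIntegrand hq hq0 hf j (by linarith)).fun_const_smul _
  · simp only [hG, mul_smul_comm, ← Finset.smul_sum]
    rw [sum_taylor_integral_dampedIntegrand hq hq0 hf hk (by linarith)]
    congr 2 with ω
    simp only [q, f, mul_div_assoc]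
    ring
  · convert integrable_exp_mul_one_sub_lowerGamma hq hq0 hf hk (by linarith : -1 < τ₀)
      using 2 with ω
    simp only [q, f, mul_div_assoc]
    ring

/-- Lemma 4 (multiscale-bootstrap Taylor extrapolation): for
`F(τ) = (2π)^{-m} ∫ e^{i⟨ω,u⟩} e^{-τ‖ω‖²/2} h̃(ω) dω`, the function `F` has
derivatives of all orders on `(0,∞)` given by inserting the factor `(−‖ω‖²/2)^j`,
and the `k`-term Taylor polynomial of `F` at `τ₀ > 0` evaluated at `τ = −1` equals
`(2π)^{-m} ∫ e^{i⟨ω,u⟩} e^{‖ω‖²/2} (1 − γ(k,(1+τ₀)‖ω‖²/2)/(k−1)!) h̃(ω) dω`, where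
the damping factor lies in `[0,1]` and the integrand is integrable. -/
theorem stmt_16 (m : ℕ) (u : Fin m → ℝ) (ht : (Fin m → ℝ) → ℂ)
    (hmeas : Measurable ht)
    (hint : Integrable (fun ω : Fin m → ℝ =>
      Real.exp ((∑ i, ω i ^ 2) / 2) • ht ω)) :
    let G : ℕ → ℝ → ℂ := fun j τ =>
      (((2 * Real.pi) ^ m)⁻¹ : ℝ) •
        ∫ ω : Fin m → ℝ,
          Complex.exp (Complex.I * ((∑ i, ω i * u i : ℝ) : ℂ))
            * ((-(∑ i, ω i ^ 2) / 2 : ℝ) : ℂ) ^ j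
            * ((Real.exp (-(τ * (∑ i, ω i ^ 2)) / 2) : ℝ) : ℂ) * ht ω
    (∀ j : ℕ, ∀ τ : ℝ, 0 < τ → HasDerivAt (G j) (G (j + 1) τ) τ) ∧
    (∀ k : ℕ, 1 ≤ k → ∀ τ₀ : ℝ, 0 < τ₀ →
      (∑ j ∈ Finset.range k, (((-1 - τ₀) ^ j / j.factorial : ℝ) : ℂ) * G j τ₀)
        = (((2 * Real.pi) ^ m)⁻¹ : ℝ) •
          ∫ ω : Fin m → ℝ,
            Complex.exp (Complex.I * ((∑ i, ω i * u i : ℝ) : ℂ))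
              * ((Real.exp ((∑ i, ω i ^ 2) / 2) : ℝ) : ℂ)
              * ((1 - lowerGamma k ((1 + τ₀) * (∑ i, ω i ^ 2) / 2)
                    / (k - 1).factorial : ℝ) : ℂ)
              * ht ω) ∧
    (∀ k : ℕ, 1 ≤ k → ∀ z : ℝ, 0 ≤ z →
      1 - lowerGamma k z / (k - 1).factorial ∈ Set.Icc (0 : ℝ) 1) ∧
    (∀ k : ℕ, 1 ≤ k → ∀ τ₀ : ℝ, 0 < τ₀ →
      Integrable (fun ω : Fin m → ℝ =>
        Complex.exp (Complex.I * ((∑ i, ω i * u i : ℝ) : ℂ))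
          * ((Real.exp ((∑ i, ω i ^ 2) / 2) : ℝ) : ℂ)
          * ((1 - lowerGamma k ((1 + τ₀) * (∑ i, ω i ^ 2) / 2)
                / (k - 1).factorial : ℝ) : ℂ)
          * ht ω)) :=
  stmt_16_general m u ht hint
end

section
/- Let w ≥ 0, c ∈ ℝ, and A, H, S ∈ ℂ. Set x := e^{-w/2}. Define the sequence (ρ_k)_{k≥1} in ℂ by ρ₁ := e^{-cw/2} H − A(H − xS) and the recurrence ρ_{k+1} := (1 − x)ρ_k + H − A(H − xS) for k ≥ 1. Then for every k ≥ 1: ρ_k = (1 − A − J_k) e^{w/2} H + (A − e^{w/2} I_k) S, where J_k := (1−x)^{k−1} (1 − e^{-(1+c)w/2} − (1−x)A) and I_k := (1−x)^{k} e^{-w/2} A. -/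
theorem affine_recurrence_eq_pow_mul_add {R : Type*} [Ring R] {u : ℕ → R} {a b p : R}
    (hp : a * p + b = p) (hu : ∀ k : ℕ, 1 ≤ k → u (k + 1) = a * u k + b) (n : ℕ) :
    u (n + 1) = a ^ n * (u 1 - p) + p := by
  induction n with
  | zero => simp
  | succ n ih =>
    rw [hu _ n.succ_pos, ih, pow_succ', mul_add, mul_assoc, add_assoc, hp]

theorem stmt_18_general (w c : ℝ) (A H S : ℂ) (ρ : ℕ → ℂ)
    (h1 : ρ 1 = ((Real.exp (-(c * w) / 2) : ℝ) : ℂ) * H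
        - A * (H - ((Real.exp (-w / 2) : ℝ) : ℂ) * S))
    (hrec : ∀ k : ℕ, 1 ≤ k →
      ρ (k + 1) = (1 - ((Real.exp (-w / 2) : ℝ) : ℂ)) * ρ k
        + H - A * (H - ((Real.exp (-w / 2) : ℝ) : ℂ) * S)) :
    ∀ k : ℕ, 1 ≤ k →
      ρ k = (1 - A - (1 - ((Real.exp (-w / 2) : ℝ) : ℂ)) ^ (k - 1)
              * (1 - ((Real.exp (-((1 + c) * w) / 2) : ℝ) : ℂ)
                 - (1 - ((Real.exp (-w / 2) : ℝ) : ℂ)) * A))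
            * ((Real.exp (w / 2) : ℝ) : ℂ) * H
          + (A - ((Real.exp (w / 2) : ℝ) : ℂ)
              * ((1 - ((Real.exp (-w / 2) : ℝ) : ℂ)) ^ k
                  * ((Real.exp (-w / 2) : ℝ) : ℂ) * A)) * S := by
  have hinv : ((Real.exp (w / 2) : ℝ) : ℂ) * ((Real.exp (-w / 2) : ℝ) : ℂ) = 1 := by
    rw [← Complex.ofReal_mul, ← Real.exp_add, neg_div, add_neg_cancel, Real.exp_zero, Complex.ofReal_one]
  have hsplit : ((Real.exp (-((1 + c) * w) / 2) : ℝ) : ℂ)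
      = ((Real.exp (-w / 2) : ℝ) : ℂ) * ((Real.exp (-(c * w) / 2) : ℝ) : ℂ) := by
    rw [← Complex.ofReal_mul, ← Real.exp_add]
    ring_nf
  set x : ℂ := ((Real.exp (-w / 2) : ℝ) : ℂ)
  set e : ℂ := ((Real.exp (w / 2) : ℝ) : ℂ)
  set E : ℂ := ((Real.exp (-(c * w) / 2) : ℝ) : ℂ)
  -- `(1 - A) e H + A S = (H - A(H - xS)) / x` is the fixed point of the recurrence
  have hfix : (1 - x) * ((1 - A) * e * H + A * S) + (H - A * (H - x * S))
      = (1 - A) * e * H + A * S := by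
    linear_combination (A - 1) * H * hinv
  have hrec' : ∀ k : ℕ, 1 ≤ k → ρ (k + 1) = (1 - x) * ρ k + (H - A * (H - x * S)) := by
    intro k hk
    rw [hrec k hk, add_sub_assoc]
  intro k hk
  obtain ⟨n, rfl⟩ := Nat.exists_eq_add_of_le' hk
  rw [affine_recurrence_eq_pow_mul_add hfix hrec' n, h1, hsplit, Nat.add_sub_cancel, pow_succ]
  linear_combination (1 - x) ^ n * (A * H - E * H + (1 - x) * A * S) * hinv

/-- Closed form of the Fourier-side recurrence for the iterated bootstrap selective
p-values (Lemma 5): with `x = e^{-w/2}`, the sequence defined by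
`ρ₁ = e^{-cw/2}H − A(H − xS)` and `ρ_{k+1} = (1−x)ρ_k + H − A(H − xS)` satisfies
`ρ_k = (1−A−J_k)e^{w/2}H + (A − e^{w/2}I_k)S` with
`J_k = (1−x)^{k−1}(1 − e^{-(1+c)w/2} − (1−x)A)` and `I_k = (1−x)^k e^{-w/2} A`. -/
theorem stmt_18 (w c : ℝ) (hw : 0 ≤ w) (A H S : ℂ) (ρ : ℕ → ℂ)
    (h1 : ρ 1 = ((Real.exp (-(c * w) / 2) : ℝ) : ℂ) * H
        - A * (H - ((Real.exp (-w / 2) : ℝ) : ℂ) * S))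
    (hrec : ∀ k : ℕ, 1 ≤ k →
      ρ (k + 1) = (1 - ((Real.exp (-w / 2) : ℝ) : ℂ)) * ρ k
        + H - A * (H - ((Real.exp (-w / 2) : ℝ) : ℂ) * S)) :
    ∀ k : ℕ, 1 ≤ k →
      ρ k = (1 - A - (1 - ((Real.exp (-w / 2) : ℝ) : ℂ)) ^ (k - 1)
              * (1 - ((Real.exp (-((1 + c) * w) / 2) : ℝ) : ℂ)
                 - (1 - ((Real.exp (-w / 2) : ℝ) : ℂ)) * A))
            * ((Real.exp (w / 2) : ℝ) : ℂ) * H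
          + (A - ((Real.exp (w / 2) : ℝ) : ℂ)
              * ((1 - ((Real.exp (-w / 2) : ℝ) : ℂ)) ^ k
                  * ((Real.exp (-w / 2) : ℝ) : ℂ) * A)) * S :=
  stmt_18_general w c A H S ρ h1 hrec
end

section
/- Let m ∈ ℕ, let h : ℝ^m → ℝ be bounded and Lipschitz continuous with Lipschitz constant L ≥ 0, and let (u,v) ∈ ℝ^m × ℝ. Suppose u' ∈ ℝ^m is such that (u', −h(u')) is a nearest point, in the Euclidean distance of ℝ^{m+1}, of the graph {(x, −h(x)) : x ∈ ℝ^m} to the point (u, v); that is, ‖u' − u‖² + (v + h(u'))² ≤ ‖x − u‖² + (v + h(x))² for all x ∈ ℝ^m. Then ‖u' − u‖ ≤ 2L(|v| + ‖h‖_∞) and |h(u') − h(u)| ≤ 2L²(|v| + ‖h‖_∞). -/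
open Set

/-!
Comparing the nearest point `u'` with the competitor `u` gives
`d² ≤ (h u - h u') (2v + h u + h u')`, where `d` is the distance from `u'` to `u`.
The first factor is at most `L d` by the Lipschitz bound and the second at most `2(|v| + ‖h‖_∞)`,
so `d ≤ 2L(|v| + ‖h‖_∞)`; applying the Lipschitz bound once more gives the estimate on `h`.
-/

theorem le_two_mul_mul_of_sq_add_sq_le {d v a a' L M : ℝ} (hd : 0 ≤ d) (hL : 0 ≤ L)
    (hnear : d ^ 2 + (v + a') ^ 2 ≤ (v + a) ^ 2) (hlip : |a - a'| ≤ L * d)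
    (ha : |a| ≤ M) (ha' : |a'| ≤ M) :
    d ≤ 2 * L * (|v| + M) := by
  have hsum : |2 * v + a + a'| ≤ 2 * (|v| + M) := by
    calc |2 * v + a + a'| ≤ |2 * v| + |a| + |a'| := abs_add_three _ _ _
      _ ≤ 2 * (|v| + M) := by rw [abs_mul, abs_two]; linarith
  have hsq : d * d ≤ d * (2 * L * (|v| + M)) :=
    calc d * d ≤ (a - a') * (2 * v + a + a') := by nlinarith
      _ ≤ |a - a'| * |2 * v + a + a'| := by rw [← abs_mul]; exact le_abs_self _
      _ ≤ (L * d) * (2 * (|v| + M)) :=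
        mul_le_mul hlip hsum (abs_nonneg _) ((abs_nonneg _).trans hlip)
      _ = d * (2 * L * (|v| + M)) := by ring
  rcases hd.eq_or_lt with rfl | hpos
  · have hM : 0 ≤ M := (abs_nonneg a).trans ha
    positivity
  · exact le_of_mul_le_mul_left hsq hpos

theorem dist_le_and_abs_sub_le_of_nearest_on_graph {X : Type*} [PseudoMetricSpace X]
    {h : X → ℝ} {L M v : ℝ} {u u' : X} (hL : 0 ≤ L)
    (hlip : ∀ x y, |h x - h y| ≤ L * dist x y) (hM : ∀ x, |h x| ≤ M)
    (hnear : ∀ x, dist u' u ^ 2 + (v + h u') ^ 2 ≤ dist x u ^ 2 + (v + h x) ^ 2) :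
    dist u' u ≤ 2 * L * (|v| + M) ∧ |h u' - h u| ≤ 2 * L ^ 2 * (|v| + M) := by
  have hdist : dist u' u ≤ 2 * L * (|v| + M) := by
    refine le_two_mul_mul_of_sq_add_sq_le dist_nonneg hL ?_ ?_ (hM u) (hM u')
    · simpa using hnear u
    · simpa [dist_comm] using hlip u u'
  refine ⟨hdist, ?_⟩
  calc |h u' - h u| ≤ L * dist u' u := hlip u' u
    _ ≤ L * (2 * L * (|v| + M)) := mul_le_mul_of_nonneg_left hdist hL
    _ = 2 * L ^ 2 * (|v| + M) := by ring

theorem EuclideanSpace.dist_toLp {m : ℕ} (x y : Fin m → ℝ) :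
    dist (WithLp.toLp 2 x) (WithLp.toLp 2 y) = Real.sqrt (∑ i, (x i - y i) ^ 2) := by
  simp [EuclideanSpace.dist_eq, Real.dist_eq, sq_abs]

/-- Projection estimate for nearly flat Lipschitz surfaces (used in the proof of
Lemma 5): if `(u', −h(u'))` is a nearest point of the graph of `−h` to `(u, v)` in
the Euclidean distance and `h` is `L`-Lipschitz (w.r.t. the Euclidean norm) and
bounded, then `‖u' − u‖ ≤ 2L(|v| + ‖h‖_∞)` and `|h(u') − h(u)| ≤ 2L²(|v| + ‖h‖_∞)`. -/
theorem stmt_19 (m : ℕ) (h : (Fin m → ℝ) → ℝ) (L : ℝ) (hL : 0 ≤ L)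
    (hbdd : BddAbove (Set.range fun x => |h x|))
    (hlip : ∀ x y : Fin m → ℝ, |h x - h y| ≤ L * Real.sqrt (∑ i, (x i - y i) ^ 2))
    (u u' : Fin m → ℝ) (v : ℝ)
    (hproj : ∀ x : Fin m → ℝ,
      (∑ i, (u' i - u i) ^ 2) + (v + h u') ^ 2
        ≤ (∑ i, (x i - u i) ^ 2) + (v + h x) ^ 2) :
    Real.sqrt (∑ i, (u' i - u i) ^ 2) ≤ 2 * L * (|v| + ⨆ x, |h x|) ∧
    |h u' - h u| ≤ 2 * L ^ 2 * (|v| + ⨆ x, |h x|) := by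
  have hsq (x : Fin m → ℝ) :
      dist (WithLp.toLp 2 x) (WithLp.toLp 2 u) ^ 2 = ∑ i, (x i - u i) ^ 2 := by
    rw [EuclideanSpace.dist_toLp, Real.sq_sqrt (by positivity)]
  rw [← EuclideanSpace.dist_toLp]
  refine dist_le_and_abs_sub_le_of_nearest_on_graph (h := fun y : EuclideanSpace ℝ (Fin m) =>
    h y.ofLp) hL (fun x y => ?_) (fun x => le_ciSup hbdd x.ofLp) (fun x => ?_)
  · simpa [← EuclideanSpace.dist_toLp] using hlip x.ofLp y.ofLp
  · simpa [hsq] using hproj x.ofLp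
end
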